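/- arXiv:1304.0237 — 6 statements merged into one kernel-verified Lean document; each statement's English description precedes it below -/
import Mathlib

section
/- The Macaulay operator is strictly monotone: if b and c are positive integers with b < c, and m is a positive integer, then b^{<m>} < c^{<m>}. -/
/-!
Write `c` as `∑_{j=J}^m C(k_j, j)` with `k_m > ⋯ > k_J ≥ J > 0`. Such a sum is below
`C(k_m + 1, m)`, so the top entry `k_m` alone decides the comparison of two
representations whenever the top entries differ; when they agree, one strips the top term
and inducts on `m`. The operator `c ↦ c^{<m>}` replaces `k_j` by `k_j + 1` and `j` by
`j + 1`, which yields again a representation of the same kind with the same top-entry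
comparisons, so it preserves strict inequalities.
-/

/-- `MacaulayRep m c J k` says that `c = C(k m, m) + C(k (m-1), m-1) + ⋯ + C(k J, J)`
is the `m`-th Macaulay representation of `c` (top entries `k m > ⋯ > k J ≥ J > 0`). -/
def MacaulayRep (m c J : ℕ) (k : ℕ → ℕ) : Prop :=
  0 < J ∧ J ≤ m ∧ StrictMonoOn k (Set.Icc J m) ∧ J ≤ k J ∧
    c = ∑ j ∈ Finset.Icc J m, (k j).choose j

open Finset

def macaulaySum (J m : ℕ) (k : ℕ → ℕ) : ℕ :=
  ∑ j ∈ Icc J m, (k j).choose j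

/-- Unlike `MacaulayRep`, the range `[J, m]` may be empty, so that stripping top terms
never leaves the class. -/
structure IsMacaulaySeq (J m : ℕ) (k : ℕ → ℕ) : Prop where
  pos : 0 < J
  strictMonoOn : StrictMonoOn k (Set.Icc J m)
  le_apply : ∀ j ∈ Set.Icc J m, j ≤ k j

def macaulayShift (k : ℕ → ℕ) (j : ℕ) : ℕ :=
  k (j - 1) + 1

lemma macaulaySum_eq_zero_of_lt {J m : ℕ} (k : ℕ → ℕ) (h : m < J) : macaulaySum J m k = 0 := by
  rw [macaulaySum, Icc_eq_empty_of_lt h, sum_empty]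

lemma macaulaySum_succ_top {J m : ℕ} (k : ℕ → ℕ) (h : J ≤ m + 1) :
    macaulaySum J (m + 1) k = macaulaySum J m k + (k (m + 1)).choose (m + 1) :=
  sum_Icc_succ_top h _

lemma macaulaySum_shift (J m : ℕ) (k : ℕ → ℕ) :
    macaulaySum (J + 1) (m + 1) (macaulayShift k) = ∑ j ∈ Icc J m, (k j + 1).choose (j + 1) := by
  rw [macaulaySum, ← map_add_right_Icc, sum_map]
  simp [macaulayShift]

lemma MacaulayRep.isMacaulaySeq {m c J : ℕ} {k : ℕ → ℕ} (h : MacaulayRep m c J k) :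
    IsMacaulaySeq J m k := by
  obtain ⟨hJ, -, hk, hkJ, -⟩ := h
  refine ⟨hJ, hk, fun j hj => ?_⟩
  obtain ⟨hJj, hjm⟩ := hj
  induction j, hJj using Nat.le_induction with
  | base => exact hkJ
  | succ j hJj ih =>
    have : k j < k (j + 1) := hk ⟨hJj, by omega⟩ ⟨by omega, hjm⟩ j.lt_succ_self
    have := ih (by omega)
    omega

namespace IsMacaulaySeq

variable {J m : ℕ} {k : ℕ → ℕ}

lemma restrict {n : ℕ} (h : IsMacaulaySeq J m k) (hnm : n ≤ m) : IsMacaulaySeq J n k :=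
  have hsub : Set.Icc J n ⊆ Set.Icc J m := Set.Icc_subset_Icc le_rfl hnm
  ⟨h.pos, h.strictMonoOn.mono hsub, fun j hj => h.le_apply j (hsub hj)⟩

lemma shift (h : IsMacaulaySeq J m k) : IsMacaulaySeq (J + 1) (m + 1) (macaulayShift k) := by
  obtain ⟨hJ, hk, hle⟩ := h
  refine ⟨J.succ_pos, fun a ha b hb hab => ?_, fun j hj => ?_⟩
  · simp only [macaulayShift, Set.mem_Icc] at ha hb ⊢
    have := hk (a := a - 1) (b := b - 1) ⟨by omega, by omega⟩ ⟨by omega, by omega⟩ (by omega)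
    omega
  · simp only [macaulayShift, Set.mem_Icc] at hj ⊢
    have := hle (j - 1) ⟨by omega, by omega⟩
    omega

lemma macaulaySum_pos (h : IsMacaulaySeq J m k) (hJm : J ≤ m) : 0 < macaulaySum J m k :=
  sum_pos (fun j hj => Nat.choose_pos (h.le_apply j (by simpa using hj))) (nonempty_Icc.2 hJm)

lemma macaulaySum_lt_choose (h : IsMacaulaySeq J m k) (hJm : J ≤ m) :
    macaulaySum J m k < (k m + 1).choose m := by
  induction m, hJm using Nat.le_induction with
  | base =>
    obtain ⟨hJ, -, hle⟩ := h
    obtain ⟨i, rfl⟩ := Nat.exists_eq_add_of_lt hJ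
    have hpos : 0 < (k (i + 1)).choose i := Nat.choose_pos (by have := hle (i + 1) (by simp); omega)
    rw [macaulaySum, Icc_self, sum_singleton, zero_add, Nat.choose_succ_succ']
    omega
  | succ n hJn ih =>
    have hkn : k n < k (n + 1) := h.strictMonoOn ⟨hJn, by omega⟩ ⟨by omega, le_rfl⟩ n.lt_succ_self
    calc macaulaySum J (n + 1) k
        = macaulaySum J n k + (k (n + 1)).choose (n + 1) := macaulaySum_succ_top k (by omega)
      _ < (k n + 1).choose n + (k (n + 1)).choose (n + 1) := by
          gcongr; exact ih (h.restrict n.le_succ)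
      _ ≤ (k (n + 1)).choose n + (k (n + 1)).choose (n + 1) :=
          Nat.add_le_add_right (Nat.choose_le_choose n hkn) _
      _ = (k (n + 1) + 1).choose (n + 1) := (Nat.choose_succ_succ _ _).symm

end IsMacaulaySeq

lemma macaulaySum_lt_of_top_lt {J J' m : ℕ} {k k' : ℕ → ℕ} (hk : IsMacaulaySeq J m k)
    (hJm : J ≤ m) (hJ'm : J' ≤ m) (htop : k m < k' m) :
    macaulaySum J m k < macaulaySum J' m k' :=
  calc macaulaySum J m k < (k m + 1).choose m := hk.macaulaySum_lt_choose hJm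
    _ ≤ (k' m).choose m := Nat.choose_le_choose m htop
    _ ≤ macaulaySum J' m k' :=
        single_le_sum (f := fun j => (k' j).choose j) (fun _ _ => Nat.zero_le _)
          (mem_Icc.2 ⟨hJ'm, le_rfl⟩)

lemma macaulaySum_shift_lt_of_lt {J J' m : ℕ} {k k' : ℕ → ℕ}
    (hk : IsMacaulaySeq J m k) (hk' : IsMacaulaySeq J' m k')
    (hlt : macaulaySum J m k < macaulaySum J' m k') :
    macaulaySum (J + 1) (m + 1) (macaulayShift k) <
      macaulaySum (J' + 1) (m + 1) (macaulayShift k') := by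
  induction m with
  | zero => simp [macaulaySum_eq_zero_of_lt k' hk'.pos] at hlt
  | succ n ih =>
    have hJ' : J' ≤ n + 1 := by
      by_contra! h
      simp [macaulaySum_eq_zero_of_lt k' h] at hlt
    rcases lt_or_ge (n + 1) J with hJ | hJ
    · rw [macaulaySum_eq_zero_of_lt _ (by omega : n + 2 < J + 1)]
      exact hk'.shift.macaulaySum_pos (by omega)
    rcases lt_trichotomy (k (n + 1)) (k' (n + 1)) with htop | htop | htop
    · exact macaulaySum_lt_of_top_lt hk.shift (by omega) (by omega) (by simpa [macaulayShift])
    · rw [macaulaySum_succ_top _ hJ, macaulaySum_succ_top _ hJ', htop, Nat.add_lt_add_iff_right]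
        at hlt
      have := ih (hk.restrict n.le_succ) (hk'.restrict n.le_succ) hlt
      rw [macaulaySum_succ_top (m := n + 1) _ (by omega),
        macaulaySum_succ_top (m := n + 1) _ (by omega)]
      simpa [macaulayShift, htop] using this
    · exact absurd hlt (macaulaySum_lt_of_top_lt hk' hJ' hJ htop).not_gt

theorem macaulay_op_strictMono_general (m b c : ℕ)
    (Jb Jc : ℕ) (kb kc : ℕ → ℕ)
    (hrepb : MacaulayRep m b Jb kb) (hrepc : MacaulayRep m c Jc kc)
    (hbc : b < c) :
    ∑ j ∈ Finset.Icc Jb m, (kb j + 1).choose (j + 1) <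
      ∑ j ∈ Finset.Icc Jc m, (kc j + 1).choose (j + 1) := by
  have hkb := hrepb.isMacaulaySeq
  have hkc := hrepc.isMacaulaySeq
  obtain ⟨-, -, -, -, rfl⟩ := hrepb
  obtain ⟨-, -, -, -, rfl⟩ := hrepc
  rw [← macaulaySum_shift, ← macaulaySum_shift]
  exact macaulaySum_shift_lt_of_lt hkb hkc hbc

/-- The Macaulay operator `c ↦ c^{<m>}` is strictly monotone: if `b < c` then
`b^{<m>} < c^{<m>}`, where `c^{<m>} = ∑_j C(k_j + 1, j + 1)` is computed from the
`m`-th Macaulay representation of `c`. -/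
theorem macaulay_op_strictMono (m b c : ℕ) (hb : 0 < b) (hm : 0 < m)
    (Jb Jc : ℕ) (kb kc : ℕ → ℕ)
    (hrepb : MacaulayRep m b Jb kb) (hrepc : MacaulayRep m c Jc kc)
    (hbc : b < c) :
    ∑ j ∈ Finset.Icc Jb m, (kb j + 1).choose (j + 1) <
      ∑ j ∈ Finset.Icc Jc m, (kc j + 1).choose (j + 1) :=
  macaulay_op_strictMono_general m b c Jb Jc kb kc hrepb hrepc hbc
end

section
/- For positive integers c, m and any natural number k with k < c, the inequality (c-k)^{<m>} ≤ c^{<m>} - k holds. -/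
open Finset

theorem sum_choose_lt_choose_succ {J m d : ℕ} {k : ℕ → ℕ} (hJ : 0 < J) (hJm : J ≤ m)
    (hk : StrictMonoOn k (Set.Icc J m)) (hkJ : J + d ≤ k J + 1) :
    ∑ j ∈ Icc J m, (k j).choose (j + d) < (k m + 1).choose (m + d) := by
  induction m, hJm using Nat.le_induction with
  | base =>
    obtain ⟨e, he⟩ : ∃ e, J + d = e + 1 := ⟨J + d - 1, by omega⟩
    rw [Icc_self, sum_singleton, he, Nat.choose_succ_succ']
    have : 0 < (k J).choose e := Nat.choose_pos (by omega)
    omega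
  | succ m hJm ih =>
    have hk_lt : k m < k (m + 1) :=
      hk ⟨hJm, by omega⟩ ⟨by omega, le_rfl⟩ (Nat.lt_succ_self m)
    have hlower := ih (hk.mono (Set.Icc_subset_Icc_right (Nat.le_succ m)))
    calc ∑ j ∈ Icc J (m + 1), (k j).choose (j + d)
        = ∑ j ∈ Icc J m, (k j).choose (j + d) + (k (m + 1)).choose (m + 1 + d) :=
          sum_Icc_succ_top (by omega) _
      _ < (k m + 1).choose (m + d) + (k (m + 1)).choose (m + 1 + d) := by omega
      _ ≤ (k (m + 1)).choose (m + d) + (k (m + 1)).choose (m + 1 + d) := by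
          gcongr; exact hk_lt
      _ = (k (m + 1) + 1).choose (m + 1 + d) := by
          rw [Nat.add_right_comm m 1 d, Nat.choose_succ_succ']

namespace MacaulayRep

variable {m c J : ℕ} {k : ℕ → ℕ}

theorem pos (h : MacaulayRep m c J k) : 0 < c := by
  obtain ⟨-, hJm, -, hkJ, rfl⟩ := h
  exact (Nat.choose_pos hkJ).trans_le <|
    single_le_sum (f := fun j => (k j).choose j) (by simp) (mem_Icc.2 ⟨le_rfl, hJm⟩)

theorem lt_choose_succ (h : MacaulayRep m c J k) : c < (k m + 1).choose m := by
  obtain ⟨hJ, hJm, hk, hkJ, rfl⟩ := h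
  exact sum_choose_lt_choose_succ (d := 0) hJ hJm hk (by omega)

theorem sum_choose_succ_lt (h : MacaulayRep m c J k) :
    ∑ j ∈ Icc J m, (k j).choose (j + 1) < (k m + 1).choose (m + 1) :=
  sum_choose_lt_choose_succ h.1 h.2.1 h.2.2.1 (by have := h.2.2.2.1; omega)

theorem choose_le (h : MacaulayRep m c J k) : (k m).choose m ≤ c := by
  rw [h.2.2.2.2]
  exact single_le_sum (f := fun j => (k j).choose j) (by simp) (mem_Icc.2 ⟨h.2.1, le_rfl⟩)

theorem choose_succ_le_sum (h : MacaulayRep m c J k) :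
    (k m).choose (m + 1) ≤ ∑ j ∈ Icc J m, (k j).choose (j + 1) :=
  single_le_sum (f := fun j => (k j).choose (j + 1)) (by simp) (mem_Icc.2 ⟨h.2.1, le_rfl⟩)

theorem tail (h : MacaulayRep (m + 1) c J k) (hJ : J ≤ m) :
    MacaulayRep m (∑ j ∈ Icc J m, (k j).choose j) J k :=
  ⟨h.1, hJ, h.2.2.1.mono (Set.Icc_subset_Icc_right (Nat.le_succ m)), h.2.2.2.1, rfl⟩

theorem eq_sum_tail_add (h : MacaulayRep (m + 1) c J k) :
    c = ∑ j ∈ Icc J m, (k j).choose j + (k (m + 1)).choose (m + 1) := by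
  rw [h.2.2.2.2, sum_Icc_succ_top h.2.1]

theorem sum_choose_succ_succ (h : MacaulayRep m c J k) :
    ∑ j ∈ Icc J m, (k j + 1).choose (j + 1) = c + ∑ j ∈ Icc J m, (k j).choose (j + 1) := by
  rw [h.2.2.2.2, ← sum_add_distrib]
  exact sum_congr rfl fun j _ => Nat.choose_succ_succ' (k j) j

theorem sum_choose_succ_mono {c₁ c₂ J₁ J₂ : ℕ} {k₁ k₂ : ℕ → ℕ}
    (h₁ : MacaulayRep m c₁ J₁ k₁) (h₂ : MacaulayRep m c₂ J₂ k₂) (hc : c₁ ≤ c₂) :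
    ∑ j ∈ Icc J₁ m, (k₁ j).choose (j + 1) ≤ ∑ j ∈ Icc J₂ m, (k₂ j).choose (j + 1) := by
  induction m generalizing c₁ c₂ J₁ J₂ with
  | zero => exact absurd h₁.2.1 (by have := h₁.1; omega)
  | succ m ih =>
    rcases lt_trichotomy (k₁ (m + 1)) (k₂ (m + 1)) with hlt | htop | hgt
    · calc _ ≤ (k₁ (m + 1) + 1).choose (m + 1 + 1) := h₁.sum_choose_succ_lt.le
        _ ≤ (k₂ (m + 1)).choose (m + 1 + 1) := Nat.choose_le_choose _ hlt
        _ ≤ _ := h₂.choose_succ_le_sum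
    · obtain rfl | hJ₁ := h₁.2.1.eq_or_lt
      · rw [Icc_self, sum_singleton, htop]
        exact h₂.choose_succ_le_sum
      have hc₁ := h₁.eq_sum_tail_add
      have hc₂ := h₂.eq_sum_tail_add
      rw [htop] at hc₁
      have hJ₂ : J₂ ≤ m := by
        by_contra! hJ₂
        obtain rfl : J₂ = m + 1 := le_antisymm h₂.2.1 hJ₂
        rw [Icc_eq_empty_of_lt (Nat.lt_succ_self m), sum_empty] at hc₂
        have := (h₁.tail (Nat.le_of_lt_succ hJ₁)).pos
        omega
      have htails := ih (h₁.tail (Nat.le_of_lt_succ hJ₁)) (h₂.tail hJ₂) (by omega)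
      rw [sum_Icc_succ_top h₁.2.1 (fun j => (k₁ j).choose (j + 1)),
        sum_Icc_succ_top h₂.2.1 (fun j => (k₂ j).choose (j + 1)), htop]
      omega
    · refine absurd hc (not_le.2 ?_)
      calc c₂ < (k₂ (m + 1) + 1).choose (m + 1) := h₂.lt_choose_succ
        _ ≤ (k₁ (m + 1)).choose (m + 1) := Nat.choose_le_choose _ hgt
        _ ≤ c₁ := h₁.choose_le

end MacaulayRep

theorem macaulay_op_sub_le_general (m c k : ℕ) (hk : k < c)
    (Jc J' : ℕ) (kc k' : ℕ → ℕ)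
    (hrepc : MacaulayRep m c Jc kc) (hrep' : MacaulayRep m (c - k) J' k') :
    ∑ j ∈ Finset.Icc J' m, (k' j + 1).choose (j + 1) ≤
      (∑ j ∈ Finset.Icc Jc m, (kc j + 1).choose (j + 1)) - k := by
  rw [hrep'.sum_choose_succ_succ, hrepc.sum_choose_succ_succ]
  have := hrep'.sum_choose_succ_mono hrepc (Nat.sub_le c k)
  omega

/-- For positive integers `c`, `m` and any `k < c`, one has `(c-k)^{<m>} ≤ c^{<m>} - k`,
where `x^{<m>} = ∑_j C(k_j + 1, j + 1)` is computed from the `m`-th Macaulay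
representation of `x`. -/
theorem macaulay_op_sub_le (m c k : ℕ) (hc : 0 < c) (hm : 0 < m) (hk : k < c)
    (Jc J' : ℕ) (kc k' : ℕ → ℕ)
    (hrepc : MacaulayRep m c Jc kc) (hrep' : MacaulayRep m (c - k) J' k') :
    ∑ j ∈ Finset.Icc J' m, (k' j + 1).choose (j + 1) ≤
      (∑ j ∈ Finset.Icc Jc m, (kc j + 1).choose (j + 1)) - k :=
  macaulay_op_sub_le_general m c k hk Jc J' kc k' hrepc hrep'
end

section
/- Let f: ℂ^n → ℂ^P and g: ℂ^n → ℂ^N be polynomial maps and h: ℂ^n → ℂ^K a polynomial map such that ‖f(z)‖² = ‖g(z)‖² + ‖h(z)‖² for all z ∈ ℂ^n. Then each component of g lies in the complex linear span of the components of f. -/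
/-!
A polynomial in `(z, z̄)` vanishing for all `z` is zero (substitute `z = x + i y` and use that
real points are Zariski dense), so `‖f(z)‖² = ‖g(z)‖² + ‖h(z)‖²` polarizes to
`⟨f(z), f(w)⟩ = ⟨g(z), g(w)⟩ + ⟨h(z), h(w)⟩` for all `z, w`. Expanding, for every finitely
supported family of coefficients `c` on points,
`∑ⱼ |∑ₓ cₓ fⱼ(x)|² = ∑ₖ |∑ₓ cₓ gₖ(x)|² + ∑ₗ |∑ₓ cₓ hₗ(x)|²`, so each linear relation
`∑ₓ cₓ fⱼ(x) = 0` satisfied by all `fⱼ` is satisfied by `gₖ`. A linear functional vanishing on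
the common kernel of finitely many others is a combination of them; evaluating at single points
writes `gₖ` as a combination of the `fⱼ`.
-/

open MvPolynomial Finsupp Submodule Set ComplexConjugate Complex

theorem mem_span_range_of_forall_linearCombination_eq_zero {K X ι : Type*} [Field K] [Finite ι]
    {f : ι → X → K} {p : X → K}
    (h : ∀ c : X →₀ K, (∀ j, linearCombination K (f j) c = 0) → linearCombination K p c = 0) :
    p ∈ span K (range f) := by
  rw [← apply_mem_span_image_iff_mem_span (llift K K K X).injective, ← range_comp]
  exact mem_span_of_iInf_ker_le_ker fun c hc => h c fun j => (mem_iInf _).1 hc j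

section Gram

variable {𝕜 X ι κ : Type*} [RCLike 𝕜] [Fintype ι] [Fintype κ]

theorem sum_linearCombination_mul_conj (f : ι → X → 𝕜) (c : X →₀ 𝕜) :
    ∑ j, linearCombination 𝕜 (f j) c * conj (linearCombination 𝕜 (f j) c) =
      c.sum fun x a => c.sum fun y b => a * conj b * ∑ j, f j x * conj (f j y) := by
  simp_rw [linearCombination_apply, Finsupp.sum, smul_eq_mul, map_sum, Finset.sum_mul_sum,
    Finset.mul_sum]
  rw [Finset.sum_comm]
  refine Finset.sum_congr rfl fun x _ => ?_
  rw [Finset.sum_comm]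
  refine Finset.sum_congr rfl fun y _ => Finset.sum_congr rfl fun j _ => ?_
  rw [map_mul]
  ring

theorem mem_span_range_of_sum_mul_conj_eq {f : ι → X → 𝕜} {g : κ → X → 𝕜}
    (hfg : ∀ x y, ∑ j, f j x * conj (f j y) = ∑ k, g k x * conj (g k y)) (k : κ) :
    g k ∈ span 𝕜 (range f) := by
  refine mem_span_range_of_forall_linearCombination_eq_zero fun c hc => ?_
  have hsum : ∑ k, linearCombination 𝕜 (g k) c * conj (linearCombination 𝕜 (g k) c) = 0 := by
    simp_rw [sum_linearCombination_mul_conj, ← hfg, ← sum_linearCombination_mul_conj, hc,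
      zero_mul, Finset.sum_const_zero]
  simp_rw [RCLike.mul_conj] at hsum
  norm_cast at hsum
  rw [Finset.sum_eq_zero_iff_of_nonneg fun _ _ => by positivity] at hsum
  simpa using hsum k (Finset.mem_univ k)

end Gram

namespace MvPolynomial

variable {σ : Type*}

theorem mem_span_range_of_eval_mem_span_range {R ι : Type*} [CommRing R] [IsDomain R]
    [Infinite R] {f : ι → MvPolynomial σ R} {p : MvPolynomial σ R}
    (h : (fun z => eval z p) ∈ span R (range fun j z => eval z (f j))) :
    p ∈ span R (range f) := by
  let L : MvPolynomial σ R →ₗ[R] (σ → R) → R := LinearMap.pi fun z => (aeval z).toLinearMap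
  rw [← apply_mem_span_image_iff_mem_span (f := L) fun p q hpq => funext fun z => congrFun hpq z,
    ← range_comp]
  exact h

theorem eq_zero_of_eval_sumElim_conj_eq_zero {Q : MvPolynomial (σ ⊕ σ) ℂ}
    (hQ : ∀ z : σ → ℂ, eval (Sum.elim z (conj ∘ z)) Q = 0) : Q = 0 := by
  set A : σ ⊕ σ → MvPolynomial (σ ⊕ σ) ℂ :=
    Sum.elim (fun i => X (.inl i) + C I * X (.inr i)) (fun i => X (.inl i) - C I * X (.inr i))
  set a : (σ ⊕ σ → ℂ) → σ ⊕ σ → ℂ := fun v =>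
    Sum.elim (fun i => v (.inl i) + I * v (.inr i)) (fun i => v (.inl i) - I * v (.inr i))
  have eval_bind₁_A (v : σ ⊕ σ → ℂ) : eval v (bind₁ A Q) = eval (a v) Q := by
    rw [eval, eval₂Hom_bind₁]
    congr 2
    ext (i | i) <;> simp [A, a]
  have a_surjective : Function.Surjective a := fun u =>
    ⟨Sum.elim (fun i => (u (.inl i) + u (.inr i)) / 2)
        (fun i => (u (.inl i) - u (.inr i)) / (2 * I)),
      by ext (i | i) <;> simp [a] <;> field_simp <;> ring⟩
  -- at a real point `v`, `a v` lies on the conjugate diagonal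
  have hA : bind₁ A Q = 0 := by
    refine funext_set (fun _ => {z | conj z = z})
      (fun _ => (infinite_range_of_injective ofReal_injective).mono
        (by rintro _ ⟨x, rfl⟩; exact conj_ofReal x))
      fun v hv => ?_
    have hv_real (s : σ ⊕ σ) : conj (v s) = v s := hv s trivial
    rw [eval_bind₁_A, map_zero]
    convert hQ fun i => v (.inl i) + I * v (.inr i) using 3
    ext (i | i) <;> simp [a, hv_real, sub_eq_add_neg]
  refine funext fun u => ?_
  obtain ⟨v, rfl⟩ := a_surjective u
  rw [← eval_bind₁_A, hA, map_zero, map_zero]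

variable {ι κ : Type*} [Fintype ι] [Fintype κ]

/-- `∑ⱼ fⱼ(z) * conj (fⱼ(w))` as a polynomial in the variables `(z, conj w)`. -/
noncomputable def polarizedNormSq (f : ι → MvPolynomial σ ℂ) : MvPolynomial (σ ⊕ σ) ℂ :=
  ∑ j, rename Sum.inl (f j) * rename Sum.inr (map (starRingEnd ℂ) (f j))

theorem eval_polarizedNormSq (f : ι → MvPolynomial σ ℂ) (z w : σ → ℂ) :
    eval (Sum.elim z (conj ∘ w)) (polarizedNormSq f) =
      ∑ j, eval z (f j) * conj (eval w (f j)) := by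
  simp only [polarizedNormSq, map_sum, map_mul, eval_rename, eval_map, Sum.elim_comp_inl,
    Sum.elim_comp_inr]
  refine Finset.sum_congr rfl fun j _ => congrArg _ ?_
  exact (eval₂_comp_left (starRingEnd ℂ) (RingHom.id ℂ) w (f j)).symm

theorem sum_eval_mul_conj_eq_of_sum_norm_sq_eq (f : ι → MvPolynomial σ ℂ)
    (g : κ → MvPolynomial σ ℂ) (hfg : ∀ z, ∑ j, ‖eval z (f j)‖ ^ 2 = ∑ k, ‖eval z (g k)‖ ^ 2)
    (z w : σ → ℂ) :
    ∑ j, eval z (f j) * conj (eval w (f j)) = ∑ k, eval z (g k) * conj (eval w (g k)) := by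
  have : polarizedNormSq f = polarizedNormSq g := by
    refine sub_eq_zero.1 (eq_zero_of_eval_sumElim_conj_eq_zero fun z => ?_)
    rw [map_sub, eval_polarizedNormSq, eval_polarizedNormSq, sub_eq_zero]
    simp only [Complex.mul_conj']
    exact_mod_cast hfg z
  rw [← eval_polarizedNormSq, this, eval_polarizedNormSq]

end MvPolynomial

/-- If `‖f(z)‖² = ‖g(z)‖² + ‖h(z)‖²` for all `z ∈ ℂⁿ`, where `f, g, h` are
polynomial maps, then each component of `g` lies in the complex linear span of
the components of `f`. -/
theorem components_in_span (n P N K : ℕ)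
    (f : Fin P → MvPolynomial (Fin n) ℂ)
    (g : Fin N → MvPolynomial (Fin n) ℂ)
    (h : Fin K → MvPolynomial (Fin n) ℂ)
    (heq : ∀ z : Fin n → ℂ,
      ∑ j, ‖eval z (f j)‖ ^ 2 = (∑ k, ‖eval z (g k)‖ ^ 2) + ∑ k, ‖eval z (h k)‖ ^ 2) :
    ∀ k, g k ∈ Submodule.span ℂ (Set.range f) := by
  intro k
  have hpolar := sum_eval_mul_conj_eq_of_sum_norm_sq_eq f (Sum.elim g h)
    (by simpa [Fintype.sum_sum_type] using heq)
  exact mem_span_range_of_eval_mem_span_range <|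
    mem_span_range_of_sum_mul_conj_eq (f := fun j z => eval z (f j))
      (g := fun i z => eval z (Sum.elim g h i)) hpolar (.inl k)
end

section
/- Let F: ℂ^n → ℂ^L and G: ℂ^n → ℂ^L be holomorphic polynomial maps with ‖F(z)‖² = ‖G(z)‖² for all z ∈ ℂ^n. Then there exists a unitary matrix U ∈ U(L) with G = U∘F. -/
/-!
Polarization: `K_F(z, w) = ∑ᵢ Fᵢ(z) · (conj Fᵢ)(w)` is a polynomial in `2n` variables with
`K_F(z, z̄) = ‖F(z)‖²`. A polynomial vanishing on the totally real set `{(z, z̄)}` vanishes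
identically, since after the invertible substitution `(x, y) ↦ (x + i y, x - i y)` it vanishes on
`ℝ²ⁿ`. Hence `K_F = K_G`: the vectors `F(z)` and `G(z)` have the same Gram matrix, so
`F(z) ↦ G(z)` is a well-defined linear isometry on the span of the `F(z)`, and it extends to a
unitary map of `ℂᴸ`.
-/

open MvPolynomial
open scoped InnerProductSpace ComplexConjugate Matrix

namespace MvPolynomial

variable {ι : Type*}

theorem eq_zero_of_eval_conj_eq_zero {p : MvPolynomial (ι ⊕ ι) ℂ}
    (h : ∀ z : ι → ℂ, eval (Sum.elim z (conj ∘ z)) p = 0) : p = 0 := by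
  let c : (ι ⊕ ι → ℂ) → ι ⊕ ι → ℂ := fun v =>
    Sum.elim (fun j => v (.inl j) + Complex.I * v (.inr j))
      (fun j => v (.inl j) - Complex.I * v (.inr j))
  let s : ι ⊕ ι → MvPolynomial (ι ⊕ ι) ℂ :=
    Sum.elim (fun j => X (.inl j) + C Complex.I * X (.inr j))
      (fun j => X (.inl j) - C Complex.I * X (.inr j))
  have eval_s : ∀ v, eval v (bind₁ s p) = eval (c v) p := by
    intro v
    rw [eval, eval₂Hom_bind₁]
    have hv : (fun i => eval v (s i)) = c v := by
      funext i
      rcases i with j | j <;> simp [s, c]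
    exact congrArg (fun w => eval w p) hv
  have hs : bind₁ s p = 0 := by
    refine funext_set (fun _ => Set.range ((↑) : ℝ → ℂ))
      (fun _ => Set.infinite_range_of_injective Complex.ofReal_injective) fun x hx => ?_
    have hreal : ∀ i, conj (x i) = x i := fun i => by
      obtain ⟨r, hr⟩ := hx i trivial
      rw [← hr, Complex.conj_ofReal]
    have hc_real : c x = Sum.elim (fun j => x (.inl j) + Complex.I * x (.inr j))
        (conj ∘ fun j => x (.inl j) + Complex.I * x (.inr j)) := by
      funext i
      rcases i with j | j <;> simp [c, hreal, sub_eq_add_neg]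
    rw [eval_s, map_zero, hc_real, h]
  have hc : Function.Surjective c := fun v =>
    ⟨Sum.elim (fun j => (v (.inl j) + v (.inr j)) / 2)
      (fun j => (v (.inl j) - v (.inr j)) / (2 * Complex.I)), by
      funext i
      rcases i with j | j <;> simp [c] <;> field_simp <;> ring⟩
  refine funext fun v => ?_
  obtain ⟨u, rfl⟩ := hc v
  rw [map_zero, ← eval_s, hs, map_zero]

variable {σ κ : Type*} [Fintype κ]

theorem eval_map_conj (w : σ → ℂ) (p : MvPolynomial σ ℂ) :
    eval (conj ∘ w) (map (starRingEnd ℂ) p) = conj (eval w p) := by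
  rw [eval_map, eval, map_eval₂Hom, RingHom.comp_id]
  rfl

noncomputable def hermitianKernel (F : κ → MvPolynomial σ ℂ) : MvPolynomial (σ ⊕ σ) ℂ :=
  ∑ i, rename Sum.inl (F i) * rename Sum.inr (map (starRingEnd ℂ) (F i))

theorem eval_hermitianKernel (F : κ → MvPolynomial σ ℂ) (z w : σ → ℂ) :
    eval (Sum.elim z (conj ∘ w)) (hermitianKernel F) =
      (fun i => eval z (F i)) ⬝ᵥ star fun i => eval w (F i) := by
  simp only [hermitianKernel, map_sum, map_mul, eval_rename, Sum.elim_comp_inl,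
    Sum.elim_comp_inr, eval_map_conj]
  rfl

theorem hermitianKernel_eq_of_sum_norm_sq_eq {F G : κ → MvPolynomial σ ℂ}
    (h : ∀ z, ∑ i, ‖eval z (F i)‖ ^ 2 = ∑ i, ‖eval z (G i)‖ ^ 2) :
    hermitianKernel F = hermitianKernel G := by
  have dotProduct_star_self : ∀ v : κ → ℂ, v ⬝ᵥ star v = ((∑ i, ‖v i‖ ^ 2 : ℝ) : ℂ) := by
    intro v
    simp [dotProduct, RCLike.mul_conj]
  rw [← sub_eq_zero]
  refine eq_zero_of_eval_conj_eq_zero fun z => ?_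
  rw [map_sub, eval_hermitianKernel, eval_hermitianKernel, dotProduct_star_self,
    dotProduct_star_self, h, sub_self]

end MvPolynomial

section

variable {𝕜 V ι : Type*} [RCLike 𝕜] [NormedAddCommGroup V] [InnerProductSpace 𝕜 V]

theorem inner_fst_eq_inner_snd_of_mem_span {f g : ι → V} (h : ∀ i j, ⟪f i, f j⟫_𝕜 = ⟪g i, g j⟫_𝕜)
    {p q : V × V} (hp : p ∈ Submodule.span 𝕜 (Set.range fun i => (f i, g i)))
    (hq : q ∈ Submodule.span 𝕜 (Set.range fun i => (f i, g i))) :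
    ⟪p.1, q.1⟫_𝕜 = ⟪p.2, q.2⟫_𝕜 := by
  induction hp, hq using Submodule.span_induction₂ with
  | mem_mem _ _ hx hy =>
    obtain ⟨i, rfl⟩ := hx
    obtain ⟨j, rfl⟩ := hy
    exact h i j
  | zero_left => simp
  | zero_right => simp
  | add_left _ _ _ _ _ _ h₁ h₂ => simp [inner_add_left, h₁, h₂]
  | add_right _ _ _ _ _ _ h₁ h₂ => simp [inner_add_right, h₁, h₂]
  | smul_left _ _ _ _ _ h => simp [inner_smul_left, h]
  | smul_right _ _ _ _ _ h => simp [inner_smul_right, h]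

theorem exists_linearIsometryEquiv_of_inner_eq [FiniteDimensional 𝕜 V] {f g : ι → V}
    (h : ∀ i j, ⟪f i, f j⟫_𝕜 = ⟪g i, g j⟫_𝕜) : ∃ Φ : V ≃ₗᵢ[𝕜] V, ∀ i, Φ (f i) = g i := by
  set W := Submodule.span 𝕜 (Set.range fun i => (f i, g i))
  have hW : ∀ p ∈ W, p.1 = 0 → p.2 = 0 := fun p hp hp₁ => by
    have := inner_fst_eq_inner_snd_of_mem_span h hp hp
    rwa [hp₁, inner_zero_left, eq_comm, inner_self_eq_zero] at this
  set T := W.toLinearPMap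
  have hT : ∀ x y, ⟪T.toFun x, T.toFun y⟫_𝕜 = ⟪x, y⟫_𝕜 := fun x y =>
    (inner_fst_eq_inner_snd_of_mem_span h (W.mem_graph_toLinearPMap hW x)
      (W.mem_graph_toLinearPMap hW y)).symm
  let Φ := (T.toFun.isometryOfInner hT).extend
  refine ⟨Φ.toLinearIsometryEquiv rfl, fun i => ?_⟩
  have hi : (f i, g i) ∈ T.graph := by
    rw [W.toLinearPMap_graph_eq hW]
    exact Submodule.subset_span ⟨i, rfl⟩
  obtain ⟨x, hx, hTx⟩ := (T.mem_graph_iff).mp hi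
  simp only at hx
  rw [LinearIsometry.coe_toLinearIsometryEquiv, ← hx, LinearIsometry.extend_apply]
  exact hTx

end

theorem Matrix.exists_mem_unitaryGroup_mulVec_eq_of_dotProduct_star_eq {𝕜 m ι : Type*} [RCLike 𝕜]
    [Fintype m] [DecidableEq m] {f g : ι → m → 𝕜}
    (h : ∀ i j, f i ⬝ᵥ star (f j) = g i ⬝ᵥ star (g j)) :
    ∃ U ∈ Matrix.unitaryGroup m 𝕜, ∀ i, U *ᵥ f i = g i := by
  obtain ⟨Φ, hΦ⟩ := exists_linearIsometryEquiv_of_inner_eq (𝕜 := 𝕜)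
    (f := fun i => WithLp.toLp 2 (f i)) (g := fun i => WithLp.toLp 2 (g i))
    fun i j => h j i
  let b := EuclideanSpace.basisFun m 𝕜
  refine ⟨Φ.toMatrix b.toBasis b.toBasis, Φ.toMatrix_mem_unitaryGroup b b, fun i => ?_⟩
  have hrepr : ∀ x : m → 𝕜, ⇑(b.toBasis.repr (WithLp.toLp 2 x)) = x := fun _ => rfl
  simpa only [hrepr, LinearEquiv.coe_coe, LinearIsometryEquiv.coe_toLinearEquiv, hΦ] using
    LinearMap.toMatrix_mulVec_repr b.toBasis b.toBasis Φ.toLinearMap (WithLp.toLp 2 (f i))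

/-- If two holomorphic polynomial maps `F, G : ℂⁿ → ℂᴸ` satisfy
`‖F(z)‖² = ‖G(z)‖²` for all `z`, then there is a unitary `U ∈ U(L)` with `G = U ∘ F`. -/
theorem unitary_of_eq_squared_norms (n L : ℕ)
    (F G : Fin L → MvPolynomial (Fin n) ℂ)
    (heq : ∀ z : Fin n → ℂ, ∑ i, ‖eval z (F i)‖ ^ 2 = ∑ i, ‖eval z (G i)‖ ^ 2) :
    ∃ U ∈ Matrix.unitaryGroup (Fin L) ℂ,
      ∀ z : Fin n → ℂ, (fun i => eval z (G i)) = U.mulVec (fun i => eval z (F i)) := by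
  have hkernel := hermitianKernel_eq_of_sum_norm_sq_eq heq
  obtain ⟨U, hU, hUFG⟩ := Matrix.exists_mem_unitaryGroup_mulVec_eq_of_dotProduct_star_eq
    (f := fun z i => eval z (F i)) (g := fun z i => eval z (G i)) fun z w => by
      simpa only [eval_hermitianKernel] using congrArg (eval (Sum.elim z (conj ∘ w))) hkernel
  exact ⟨U, hU, fun z => (hUFG z).symm⟩
end

section
/- Let I be a homogeneous ideal in ℂ[z_1,…,z_n] generated by P linearly independent homogeneous polynomials of degree m, with P < n. Then dim_ℂ I_{m+1} ≥ nP − P(P−1)/2. -/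
/-!
Fix a monomial order. The leading monomials of the nonzero elements of a finite-dimensional
space `V` of polynomials are exactly `dim V` many, say `μ₁, …, μ_P`. If `X i * V ⊆ W` for all
`i`, then every `eᵢ + μⱼ` (with `eᵢ` the exponent of `X i`) is a leading monomial of `W`, so
`dim W` is at least the number of these monomials. Two translates `μ + {e₁, …, eₙ}` and
`ν + {e₁, …, eₙ}` meet at most in `μ ⊔ ν`, which leaves at least `nP - P(P-1)/2` of them.
-/

open MvPolynomial Finset

theorem Finset.mul_card_sub_choose_two_le_card_biUnion {ι α : Type*} [DecidableEq ι]
    [DecidableEq α] {n : ℕ} (s : Finset ι) (t : ι → Finset α) (ht : ∀ i ∈ s, n ≤ #(t i))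
    (hst : (s : Set ι).Pairwise fun i j => #(t i ∩ t j) ≤ 1) :
    n * #s - (#s).choose 2 ≤ #(s.biUnion t) := by
  induction s using Finset.induction_on with
  | empty => simp
  | insert a s ha ih =>
    have hA : n ≤ #(t a) := ht a (mem_insert_self a s)
    have hB := ih (fun i hi => ht i (mem_insert_of_mem hi)) (hst.mono (by simp))
    have hAB : #(t a ∩ s.biUnion t) ≤ #s := calc
      _ = #(s.biUnion fun j => t a ∩ t j) := by rw [inter_biUnion]
      _ ≤ ∑ j ∈ s, #(t a ∩ t j) := card_biUnion_le
      _ ≤ ∑ _j ∈ s, 1 := sum_le_sum fun j hj => hst (mem_insert_self a s)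
          (mem_insert_of_mem hj) (ne_of_mem_of_not_mem hj ha).symm
      _ = #s := by simp
    have := card_union_add_card_inter (t a) (s.biUnion t)
    have hchoose : (#s + 1).choose 2 = #s + (#s).choose 2 := by
      rw [Nat.choose_succ_succ', Nat.choose_one_right]
    rw [biUnion_insert, card_insert_of_notMem ha, hchoose, mul_add_one]
    omega

theorem Finsupp.single_add_eq_sup {σ : Type*} {i k : σ} {μ ν : σ →₀ ℕ} (hμν : μ ≠ ν)
    (h : single i 1 + μ = single k 1 + ν) : single i 1 + μ = μ ⊔ ν := by
  classical
  obtain rfl | hik := eq_or_ne i k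
  · exact absurd (add_left_cancel h) hμν
  ext j
  have hj := DFunLike.congr_fun h j
  simp only [Finsupp.add_apply, Finsupp.single_apply, Finsupp.sup_apply, max_def] at hj ⊢
  split_ifs at hj ⊢ <;> first | omega | (subst_vars; contradiction)

theorem Finsupp.card_inter_image_single_add_le_one {σ : Type*} [Fintype σ] [DecidableEq σ]
    {μ ν : σ →₀ ℕ} (hμν : μ ≠ ν) :
    #((univ.image fun i => single i 1 + μ) ∩ univ.image fun i => single i 1 + ν) ≤ 1 := by
  refine card_le_one.mpr fun x hx y hy => ?_
  simp only [mem_inter, mem_image, mem_univ, true_and] at hx hy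
  obtain ⟨⟨i, rfl⟩, ⟨k, hk⟩⟩ := hx
  obtain ⟨⟨i', rfl⟩, ⟨k', hk'⟩⟩ := hy
  rw [single_add_eq_sup hμν hk.symm, single_add_eq_sup hμν hk'.symm]

theorem Finsupp.card_mul_card_sub_choose_two_le_card_biUnion_single_add {σ : Type*} [Fintype σ]
    [DecidableEq σ] (D : Finset (σ →₀ ℕ)) :
    Fintype.card σ * #D - (#D).choose 2 ≤
      #(D.biUnion fun μ => univ.image fun i => single i 1 + μ) := by
  refine mul_card_sub_choose_two_le_card_biUnion D _ (fun μ _ => ?_)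
    fun μ _ ν _ => card_inter_image_single_add_le_one
  rw [card_image_of_injective _ fun i j h =>
    single_left_injective one_ne_zero (add_right_cancel h), card_univ]

namespace MonomialOrder

variable {σ R K : Type*} (m : MonomialOrder σ)

theorem linearIndependent_of_injective_degree [CommRing R] [NoZeroDivisors R] {ι : Type*}
    {g : ι → MvPolynomial σ R} (hg : ∀ i, g i ≠ 0) (hdeg : Function.Injective (m.degree ∘ g)) :
    LinearIndependent R g := by
  classical
  rw [linearIndependent_iff']
  intro s c hsum i hi
  by_contra hci
  set t := s.filter (c · ≠ 0)
  obtain ⟨i₀, hi₀, hmax⟩ :=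
    t.exists_max_image (m.toSyn ∘ m.degree ∘ g) ⟨i, by simp [t, hi, hci]⟩
  have hsum' : ∑ j ∈ t, c j • g j = 0 := by
    rwa [Finset.sum_filter_of_ne (p := (c · ≠ 0)) fun j _ h hc => h (by rw [hc, zero_smul])]
  have hcoeff := congrArg (coeff (m.degree (g i₀))) hsum'
  rw [coeff_sum, Finset.sum_eq_single_of_mem i₀ hi₀] at hcoeff
  · simp only [coeff_smul, smul_eq_mul, coeff_zero, mul_eq_zero,
      m.coeff_degree_eq_zero_iff, hg, or_false] at hcoeff
    exact (Finset.mem_filter.mp hi₀).2 hcoeff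
  · intro j hj hji
    rw [coeff_smul, m.coeff_eq_zero_of_lt, smul_zero]
    exact (hmax j hj).lt_of_ne fun h => hji (hdeg (m.toSyn.injective h))

variable [Field K]

def leadingDegrees (V : Submodule K (MvPolynomial σ K)) : Set (σ →₀ ℕ) :=
  {d | ∃ p ∈ V, p ≠ 0 ∧ m.degree p = d}

section FiniteDimensional

variable {m} {V : Submodule K (MvPolynomial σ K)} [FiniteDimensional K V]

theorem card_le_finrank_of_subset_leadingDegrees {D : Finset (σ →₀ ℕ)}
    (hD : ↑D ⊆ m.leadingDegrees V) : #D ≤ Module.finrank K V := by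
  choose g hgV hg0 hdeg using fun d : D => hD d.2
  have hind : LinearIndependent K g :=
    m.linearIndependent_of_injective_degree hg0 fun d e h => Subtype.ext <| by
      simpa only [Function.comp_apply, hdeg] using h
  have hindV : LinearIndependent K fun d => (⟨g d, hgV d⟩ : V) :=
    LinearIndependent.of_comp V.subtype hind
  simpa using hindV.fintype_card_le_finrank

theorem finite_leadingDegrees : (m.leadingDegrees V).Finite := by
  by_contra hinf
  obtain ⟨D, hD, hcard⟩ := Set.Infinite.exists_subset_card_eq hinf (Module.finrank K V + 1)
  have := card_le_finrank_of_subset_leadingDegrees hD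
  omega

theorem finrank_le_ncard_leadingDegrees : Module.finrank K V ≤ (m.leadingDegrees V).ncard := by
  set D := (finite_leadingDegrees (m := m) (V := V)).toFinset
  let φ : V →ₗ[K] D → K := LinearMap.pi fun d => (lcoeff K d.1).comp V.subtype
  have hφ : Function.Injective φ := by
    rw [← LinearMap.ker_eq_bot, LinearMap.ker_eq_bot']
    intro p hp
    by_contra hp0
    have hpV : (p : MvPolynomial σ K) ≠ 0 := by simpa using hp0
    have hd : m.degree (p : MvPolynomial σ K) ∈ D := by
      simpa [D] using ⟨p, p.2, hpV, rfl⟩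
    have := congrFun hp ⟨_, hd⟩
    simp [φ, m.coeff_degree_eq_zero_iff, hpV] at this
  calc Module.finrank K V ≤ Module.finrank K (D → K) :=
        LinearMap.finrank_le_finrank_of_injective hφ
    _ = (m.leadingDegrees V).ncard := by
        simp [D, Set.ncard_eq_toFinset_card _ finite_leadingDegrees]

theorem ncard_leadingDegrees : (m.leadingDegrees V).ncard = Module.finrank K V := by
  refine le_antisymm ?_ finrank_le_ncard_leadingDegrees
  rw [Set.ncard_eq_toFinset_card _ finite_leadingDegrees]
  exact card_le_finrank_of_subset_leadingDegrees (m := m) (by simp)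

end FiniteDimensional

theorem single_add_mem_leadingDegrees {V W : Submodule K (MvPolynomial σ K)} {i : σ}
    (hVW : ∀ p ∈ V, X i * p ∈ W) {d : σ →₀ ℕ} (hd : d ∈ m.leadingDegrees V) :
    Finsupp.single i 1 + d ∈ m.leadingDegrees W := by
  obtain ⟨p, hpV, hp0, rfl⟩ := hd
  exact ⟨X i * p, hVW p hpV, mul_ne_zero (X_ne_zero i) hp0,
    by rw [m.degree_mul (X_ne_zero i) hp0, m.degree_X]⟩

end MonomialOrder

instance MvPolynomial.finite_homogeneousSubmodule {σ R : Type*} [CommSemiring R] [Finite σ]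
    (d : ℕ) : Module.Finite R (homogeneousSubmodule σ R d) :=
  Module.Finite.iff_fg.mpr (homogeneousSubmodule_fg (σ := σ) (R := R) d)

theorem MvPolynomial.X_mul_mem_span_inf_homogeneousSubmodule {σ R : Type*} [CommSemiring R]
    {s : Set (MvPolynomial σ R)} {d : ℕ} (hs : ∀ q ∈ s, q.IsHomogeneous d)
    {p : MvPolynomial σ R} (hp : p ∈ Submodule.span R s) (i : σ) :
    X i * p ∈ (Ideal.span s).restrictScalars R ⊓ homogeneousSubmodule σ R (d + 1) := by
  have hpd : p.IsHomogeneous d := (Submodule.span_le (p := homogeneousSubmodule σ R d)).mpr hs hp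
  refine ⟨Ideal.mul_mem_left _ _ (Submodule.span_le_restrictScalars R _ _ hp), ?_⟩
  simpa [add_comm] using (isHomogeneous_X R i).mul hpd

theorem MvPolynomial.card_mul_finrank_sub_choose_two_le_finrank {σ K : Type*} [Fintype σ]
    [LinearOrder σ] [Field K] {V W : Submodule K (MvPolynomial σ K)} [FiniteDimensional K V]
    [FiniteDimensional K W] (hVW : ∀ p ∈ V, ∀ i, X i * p ∈ W) :
    Fintype.card σ * Module.finrank K V - (Module.finrank K V).choose 2 ≤
      Module.finrank K W := by
  let o : MonomialOrder σ := .lex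
  set D := (o.finite_leadingDegrees (V := V)).toFinset
  have hD : #D = Module.finrank K V := by
    rw [← Set.ncard_eq_toFinset_card _ o.finite_leadingDegrees, o.ncard_leadingDegrees]
  have hDW : ↑(D.biUnion fun μ => univ.image fun i => Finsupp.single i 1 + μ) ⊆
      o.leadingDegrees W := by
    intro ν hν
    simp only [coe_biUnion, Set.mem_iUnion, coe_image, coe_univ, Set.image_univ,
      Set.mem_range] at hν
    obtain ⟨μ, hμ, i, rfl⟩ := hν
    exact o.single_add_mem_leadingDegrees (hVW · · i) (by simpa [D] using hμ)
  rw [← hD]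
  exact (Finsupp.card_mul_card_sub_choose_two_le_card_biUnion_single_add D).trans
    (MonomialOrder.card_le_finrank_of_subset_leadingDegrees hDW)

theorem ideal_piece_dim_lower_bound_general (n m P : ℕ)
    (f : Fin P → MvPolynomial (Fin n) ℂ)
    (hf : ∀ j, (f j).IsHomogeneous m)
    (hind : LinearIndependent ℂ f) :
    n * P - P * (P - 1) / 2 ≤
      Module.finrank ℂ
        ((Submodule.restrictScalars ℂ (Ideal.span (Set.range f))) ⊓
          homogeneousSubmodule (Fin n) ℂ (m + 1) :
          Submodule ℂ (MvPolynomial (Fin n) ℂ)) := by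
  have : FiniteDimensional ℂ (Submodule.span ℂ (Set.range f)) :=
    .span_of_finite ℂ (Set.finite_range f)
  have key := card_mul_finrank_sub_choose_two_le_finrank fun p hp i =>
    X_mul_mem_span_inf_homogeneousSubmodule (Set.forall_mem_range.mpr hf) hp i
  rwa [finrank_span_eq_card hind, Fintype.card_fin, Fintype.card_fin,
    Nat.choose_two_right] at key

/-- If `I ⊆ ℂ[z₁,…,zₙ]` is generated by `P` linearly independent homogeneous
polynomials of degree `m`, with `P < n`, then `dim_ℂ I_{m+1} ≥ nP − P(P−1)/2`. -/
theorem ideal_piece_dim_lower_bound (n m P : ℕ) (hPn : P < n)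
    (f : Fin P → MvPolynomial (Fin n) ℂ)
    (hf : ∀ j, (f j).IsHomogeneous m)
    (hind : LinearIndependent ℂ f) :
    n * P - P * (P - 1) / 2 ≤
      Module.finrank ℂ
        ((Submodule.restrictScalars ℂ (Ideal.span (Set.range f))) ⊓
          homogeneousSubmodule (Fin n) ℂ (m + 1) :
          Submodule ℂ (MvPolynomial (Fin n) ℂ)) :=
  ideal_piece_dim_lower_bound_general n m P f hf hind
end

section
/- If r(z,z̄) = ‖f(z)‖² for a homogeneous holomorphic polynomial map f with P components (P minimal, i.e., components linearly independent), and d ≥ 1, then the rank ρ of the bihomogeneous polynomial r(z,z̄)·‖z‖^{2d} satisfies: either nP − P(P−1)/2 ≤ ρ ≤ nP for some natural number P' = P < n, or ρ ≥ n(n+1)/2. -/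
/-!
Write `I` for the ideal generated by the `f j` and `I_k` for its degree-`k` part, so that
`ρ = dim I_{m+d}`. Fix a monomial order. A finite-dimensional space of polynomials has at least
as many distinct leading monomials as its dimension, and polynomials with distinct leading
monomials are independent. Multiplying by the variables sends the leading monomials `M` of
`I_k` to leading monomials `μ + e_i` of `I_{k+1}`, and there are at least `∑_{j < #M} (n - j)`
of these, because a new monomial `μ` shares at most one neighbour `μ + e_i` with each old one.
Hence `dim I_{k+1} ≥ ∑_{j < dim I_k} (n - j)`. Since `dim I_m ≥ P`, for `d = 1` this gives
`nP - P(P-1)/2` when `P < n` (and then `I_{m+1}` is spanned by the `nP` products `x_i f_j`) and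
`n(n+1)/2` when `P ≥ n`; for `d ≥ 2` one step gives `dim I_{m+1} ≥ n`, and the next
`dim I_{m+d} ≥ n(n+1)/2`.
-/

open MvPolynomial Finset Module

namespace SquaredNormRank

section UpperShadow

variable {σ : Type*} [Fintype σ] [DecidableEq σ]

noncomputable def upperCovers (μ : σ →₀ ℕ) : Finset (σ →₀ ℕ) :=
  univ.image fun i => μ + Finsupp.single i 1

noncomputable def upperShadow (M : Finset (σ →₀ ℕ)) : Finset (σ →₀ ℕ) :=
  M.biUnion upperCovers

lemma mem_upperShadow {M : Finset (σ →₀ ℕ)} {τ : σ →₀ ℕ} :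
    τ ∈ upperShadow M ↔ ∃ μ ∈ M, ∃ i, μ + Finsupp.single i 1 = τ := by
  simp [upperShadow, upperCovers]

lemma card_upperCovers (μ : σ →₀ ℕ) : #(upperCovers μ) = Fintype.card σ :=
  card_image_of_injective _ <|
    (add_right_injective μ).comp (Finsupp.single_left_injective one_ne_zero)

lemma card_upperCovers_inter_le_one {μ ν : σ →₀ ℕ} (hμν : μ ≠ ν) :
    #(upperCovers μ ∩ upperCovers ν) ≤ 1 := by
  simp only [card_le_one, mem_inter, upperCovers, mem_image, mem_univ, true_and]
  rintro _ ⟨⟨i, rfl⟩, j, hij⟩ _ ⟨⟨i', rfl⟩, j', hij'⟩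
  have hji : j ≠ i := by
    rintro rfl
    exact hμν (add_right_cancel hij).symm
  -- Reading both equalities at the coordinate `i` forces `i' = i`.
  have h := congr($hij i)
  have h' := congr($hij' i)
  have hi' : i' = i := by
    by_contra hi'
    simp only [Finsupp.add_apply, Finsupp.single_eq_same, Finsupp.single_apply, if_neg hji,
      if_neg hi'] at h h'
    split_ifs at h' <;> omega
  rw [hi']

theorem sum_range_tsub_le_card_upperShadow (M : Finset (σ →₀ ℕ)) :
    ∑ k ∈ range #M, (Fintype.card σ - k) ≤ #(upperShadow M) := by
  induction M using Finset.induction_on with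
  | empty => simp
  | insert μ M hμ ih =>
    have hinter : #(upperCovers μ ∩ upperShadow M) ≤ #M := by
      rw [upperShadow, inter_biUnion]
      simpa using card_biUnion_le_card_mul M _ 1 fun ν hν =>
        card_upperCovers_inter_le_one (ne_of_mem_of_not_mem hν hμ).symm
    have hunion := card_union_add_card_inter (upperCovers μ) (upperShadow M)
    have hshadow : upperShadow (insert μ M) = upperCovers μ ∪ upperShadow M := biUnion_insert
    rw [hshadow, card_insert_of_notMem hμ, sum_range_succ]
    have hcovers : #(upperCovers μ ∩ upperShadow M) ≤ #(upperCovers μ) :=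
      card_le_card inter_subset_left
    rw [card_upperCovers] at hunion hcovers
    omega

end UpperShadow

section LeadingMonomials

variable {σ K : Type*} [Field K] (m : MonomialOrder σ)

theorem linearIndependent_of_injective_degree {ι : Type*} {v : ι → MvPolynomial σ K}
    (hv : ∀ i, v i ≠ 0) (hinj : Function.Injective fun i => m.degree (v i)) :
    LinearIndependent K v := by
  classical
  refine linearIndependent_iff'.mpr fun s g hsum i hi => by_contra fun hgi => ?_
  obtain ⟨j, hj, hmax⟩ := (s.filter (g · ≠ 0)).exists_max_image
    (fun k => m.toSyn (m.degree (v k))) ⟨i, mem_filter.mpr ⟨hi, hgi⟩⟩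
  rw [mem_filter] at hj
  -- Among the terms with nonzero coefficient, only `v j` reaches the monomial `m.degree (v j)`.
  have hcoeff : coeff (m.degree (v j)) (∑ k ∈ s, g k • v k) = g j * m.leadingCoeff (v j) := by
    rw [coeff_sum, sum_eq_single j]
    · rw [coeff_smul, smul_eq_mul, MonomialOrder.leadingCoeff]
    · intro k hk hkj
      by_cases hgk : g k = 0
      · rw [hgk, zero_smul, coeff_zero]
      rw [coeff_smul, m.coeff_eq_zero_of_lt, smul_zero]
      exact (hmax k (mem_filter.mpr ⟨hk, hgk⟩)).lt_of_ne fun h =>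
        hkj (hinj (m.toSyn.injective h))
    · exact fun h => absurd hj.1 h
  rw [hsum, coeff_zero] at hcoeff
  exact mul_ne_zero hj.2 (m.leadingCoeff_ne_zero_iff.mpr (hv j)) hcoeff.symm

theorem card_le_finrank_of_forall_exists_degree_eq (W : Submodule K (MvPolynomial σ K))
    [FiniteDimensional K W] (T : Finset (σ →₀ ℕ))
    (hT : ∀ τ ∈ T, ∃ w ∈ W, w ≠ 0 ∧ m.degree w = τ) :
    #T ≤ finrank K W := by
  choose! w hwW hw0 hdeg using hT
  have hli : LinearIndependent K fun τ : T => (⟨w τ, hwW τ τ.2⟩ : W) := by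
    refine .of_comp W.subtype (linearIndependent_of_injective_degree m (fun τ => hw0 τ τ.2) ?_)
    intro τ τ' h
    simp only [Function.comp_apply, Submodule.coe_subtype, hdeg τ τ.2, hdeg τ' τ'.2] at h
    exact Subtype.ext h
  simpa using hli.fintype_card_le_finrank

theorem exists_finset_degree_finrank_le_card (V : Submodule K (MvPolynomial σ K))
    [FiniteDimensional K V] :
    ∃ D : Finset (σ →₀ ℕ), finrank K V ≤ #D ∧ ∀ μ ∈ D, ∃ v ∈ V, v ≠ 0 ∧ m.degree v = μ := by
  classical
  obtain ⟨S, hS⟩ := (Submodule.fg_iff_finiteDimensional V).mpr inferInstance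
  let D := (S.biUnion support).filter fun μ => ∃ v ∈ V, v ≠ 0 ∧ m.degree v = μ
  have hsupport : V ≤ restrictSupport K (S.biUnion support : Set (σ →₀ ℕ)) := by
    rw [← hS, Submodule.span_le]
    intro p hp
    rw [SetLike.mem_coe, mem_restrictSupport_iff]
    exact_mod_cast subset_biUnion_of_mem support hp
  let φ : V →ₗ[K] D → K := LinearMap.pi fun μ => (lcoeff K μ.1).comp V.subtype
  have hφ : Function.Injective φ := by
    rw [← LinearMap.ker_eq_bot, Submodule.eq_bot_iff]
    rintro ⟨v, hv⟩ hker
    by_contra hne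
    have hv0 : v ≠ 0 := fun h => hne (by simp [h])
    have hmem : m.degree v ∈ D := mem_filter.mpr
      ⟨mem_coe.mp (hsupport hv (m.degree_mem_support hv0)), v, hv, hv0, rfl⟩
    exact m.coeff_degree_ne_zero_iff.mpr hv0 (congrFun hker ⟨_, hmem⟩)
  refine ⟨D, ?_, fun μ hμ => (mem_filter.mp hμ).2⟩
  simpa using LinearMap.finrank_le_finrank_of_injective hφ

end LeadingMonomials

theorem sum_range_tsub_finrank_le_finrank {σ K : Type*} [Fintype σ] [Field K]
    {V W : Submodule K (MvPolynomial σ K)} [FiniteDimensional K V] [FiniteDimensional K W]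
    (hVW : ∀ i, ∀ v ∈ V, X i * v ∈ W) :
    ∑ k ∈ range (finrank K V), (Fintype.card σ - k) ≤ finrank K W := by
  classical
  let _ : LinearOrder σ := LinearOrder.lift' _ (Fintype.equivFin σ).injective
  let m : MonomialOrder σ := .lex
  obtain ⟨D, hVD, hD⟩ := exists_finset_degree_finrank_le_card m V
  calc ∑ k ∈ range (finrank K V), (Fintype.card σ - k)
      ≤ ∑ k ∈ range #D, (Fintype.card σ - k) :=
        sum_le_sum_of_subset (range_subset_range.mpr hVD)
    _ ≤ #(upperShadow D) := sum_range_tsub_le_card_upperShadow D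
    _ ≤ finrank K W := by
        refine card_le_finrank_of_forall_exists_degree_eq m W _ fun τ hτ => ?_
        obtain ⟨μ, hμ, i, rfl⟩ := mem_upperShadow.mp hτ
        obtain ⟨v, hv, hv0, rfl⟩ := hD μ hμ
        refine ⟨X i * v, hVW i v hv, mul_ne_zero (X_ne_zero i) hv0, ?_⟩
        rw [m.degree_mul (X_ne_zero i) hv0, m.degree_X, add_comm]

section HomogeneousPiece

variable {σ R : Type*} [CommSemiring R]

noncomputable def homogeneousPiece (I : Ideal (MvPolynomial σ R)) (k : ℕ) :
    Submodule R (MvPolynomial σ R) :=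
  I.restrictScalars R ⊓ homogeneousSubmodule σ R k

lemma mem_homogeneousPiece {I : Ideal (MvPolynomial σ R)} {k : ℕ} {p : MvPolynomial σ R} :
    p ∈ homogeneousPiece I k ↔ p ∈ I ∧ p.IsHomogeneous k :=
  Iff.rfl

lemma X_mul_mem_homogeneousPiece {I : Ideal (MvPolynomial σ R)} {k : ℕ} {p : MvPolynomial σ R}
    (i : σ) (hp : p ∈ homogeneousPiece I k) : X i * p ∈ homogeneousPiece I (k + 1) := by
  rw [mem_homogeneousPiece] at hp ⊢
  refine ⟨I.mul_mem_left _ hp.1, ?_⟩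
  simpa [add_comm] using (isHomogeneous_X R i).mul hp.2

instance {K : Type*} [Field K] [Finite σ] (I : Ideal (MvPolynomial σ K)) (k : ℕ) :
    FiniteDimensional K (homogeneousPiece I k) :=
  have : FiniteDimensional K (homogeneousSubmodule σ K k) :=
    (Submodule.fg_iff_finiteDimensional _).mp (homogeneousSubmodule_fg σ K k)
  Submodule.finiteDimensional_of_le inf_le_right

lemma homogeneousComponent_mul_of_isHomogeneous {k m : ℕ} (a : MvPolynomial σ R)
    {g : MvPolynomial σ R} (hg : g.IsHomogeneous m) :
    homogeneousComponent (k + m) (a * g) = homogeneousComponent k a * g := by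
  induction a using MvPolynomial.induction_on' with
  | add p q hp hq => rw [add_mul, map_add, map_add, hp, hq, add_mul]
  | monomial s c =>
    have hmono : (monomial s c).IsHomogeneous s.degree := isHomogeneous_monomial c rfl
    rw [homogeneousComponent_of_mem (hmono.mul hg), homogeneousComponent_of_mem hmono]
    by_cases hs : k = s.degree
    · rw [if_pos (by omega), if_pos hs]
    · rw [if_neg (by omega), if_neg hs, zero_mul]

variable {ι : Type*} {f : ι → MvPolynomial σ R} {m : ℕ}

lemma span_le_homogeneousPiece (hf : ∀ j, (f j).IsHomogeneous m) :
    Submodule.span R (Set.range f) ≤ homogeneousPiece (Ideal.span (Set.range f)) m :=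
  Submodule.span_le.mpr <| Set.range_subset_iff.mpr fun j =>
    mem_homogeneousPiece.mpr ⟨Ideal.subset_span ⟨j, rfl⟩, hf j⟩

lemma exists_eq_sum_mul_of_mem_homogeneousPiece [Fintype ι] (hf : ∀ j, (f j).IsHomogeneous m)
    {k : ℕ} {p : MvPolynomial σ R}
    (hp : p ∈ homogeneousPiece (Ideal.span (Set.range f)) (k + m)) :
    ∃ a : ι → MvPolynomial σ R, (∀ j, (a j).IsHomogeneous k) ∧ p = ∑ j, a j * f j := by
  obtain ⟨hpI, hph⟩ := mem_homogeneousPiece.mp hp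
  obtain ⟨a, rfl⟩ := Ideal.mem_span_range_iff_exists_fun.mp hpI
  refine ⟨fun j => homogeneousComponent k (a j),
    fun j => homogeneousComponent_isHomogeneous _ _, ?_⟩
  conv_lhs => rw [← homogeneousComponent_eq_self hph, map_sum]
  exact sum_congr rfl fun j _ => homogeneousComponent_mul_of_isHomogeneous _ (hf j)

lemma homogeneousPiece_succ_le_span_X_mul [Fintype σ] [Fintype ι]
    (hf : ∀ j, (f j).IsHomogeneous m) :
    homogeneousPiece (Ideal.span (Set.range f)) (m + 1) ≤
      Submodule.span R (Set.range fun ij : σ × ι => X ij.1 * f ij.2) := by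
  intro p hp
  rw [add_comm] at hp
  obtain ⟨a, ha, rfl⟩ := exists_eq_sum_mul_of_mem_homogeneousPiece hf hp
  refine Submodule.sum_mem _ fun j _ => ?_
  have : a j ∈ Submodule.span R (Set.range X) := by
    rw [← homogeneousSubmodule_one_eq_span_X]
    exact ha j
  obtain ⟨c, hc⟩ := (Submodule.mem_span_range_iff_exists_fun R).mp this
  rw [← hc, sum_mul]
  exact Submodule.sum_mem _ fun i _ => by
    rw [smul_mul_assoc]
    exact Submodule.smul_mem _ _ (Submodule.subset_span ⟨(i, j), rfl⟩)

end HomogeneousPiece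

section Finrank

variable {σ K ι : Type*} [Fintype σ] [Field K]

lemma sum_range_tsub_finrank_homogeneousPiece_le (I : Ideal (MvPolynomial σ K)) (k : ℕ) :
    ∑ j ∈ range (finrank K (homogeneousPiece I k)), (Fintype.card σ - j) ≤
      finrank K (homogeneousPiece I (k + 1)) :=
  sum_range_tsub_finrank_le_finrank fun i _ hv => X_mul_mem_homogeneousPiece i hv

variable [Fintype ι] {f : ι → MvPolynomial σ K} {m : ℕ}

lemma card_le_finrank_homogeneousPiece (hf : ∀ j, (f j).IsHomogeneous m)
    (hind : LinearIndependent K f) :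
    Fintype.card ι ≤ finrank K (homogeneousPiece (Ideal.span (Set.range f)) m) :=
  finrank_span_eq_card hind ▸ Submodule.finrank_mono (span_le_homogeneousPiece hf)

lemma finrank_homogeneousPiece_succ_le (hf : ∀ j, (f j).IsHomogeneous m) :
    finrank K (homogeneousPiece (Ideal.span (Set.range f)) (m + 1)) ≤
      Fintype.card σ * Fintype.card ι := by
  have := FiniteDimensional.span_of_finite K (Set.finite_range fun ij : σ × ι => X ij.1 * f ij.2)
  refine (Submodule.finrank_mono (homogeneousPiece_succ_le_span_X_mul hf)).trans ?_
  simpa [Set.finrank] using finrank_range_le_card (R := K) fun ij : σ × ι => X ij.1 * f ij.2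

end Finrank

section Arithmetic

lemma sum_range_tsub_mono (n : ℕ) : Monotone fun p => ∑ k ∈ range p, (n - k) :=
  fun _ _ h => sum_le_sum_of_subset (range_subset_range.mpr h)

lemma sum_range_tsub_self (n : ℕ) : ∑ k ∈ range n, (n - k) = n * (n + 1) / 2 := by
  rw [← sum_range_reflect, sum_congr rfl fun j hj => show n - (n - 1 - j) = j + 1 by
    have := mem_range.mp hj; omega]
  have := sum_range_succ' (fun j => j) n
  rw [sum_range_id, Nat.add_sub_cancel, add_zero] at this
  rw [← this, mul_comm]

lemma mul_sub_le_sum_range_tsub {n p : ℕ} (h : p ≤ n) :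
    n * p - p * (p - 1) / 2 ≤ ∑ k ∈ range p, (n - k) := by
  have hsplit : ∑ k ∈ range p, (n - k) + ∑ k ∈ range p, k = n * p := by
    rw [← sum_add_distrib, sum_congr rfl fun k hk => Nat.sub_add_cancel (by
      linarith [mem_range.mp hk]), sum_const, card_range, smul_eq_mul, mul_comm]
  have := sum_range_id_mul_two p
  omega

lemma mul_succ_div_two_le_of_sum_range_tsub_le {n : ℕ} {r : ℕ → ℕ} (h0 : 1 ≤ r 0)
    (hstep : ∀ k, ∑ j ∈ range (r k), (n - j) ≤ r (k + 1)) (k : ℕ) :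
    n * (n + 1) / 2 ≤ r (k + 2) := by
  have hmono := sum_range_tsub_mono n
  have hn : n ≤ ∑ j ∈ range n, (n - j) := by
    rcases n.eq_zero_or_pos with rfl | hn
    · simp
    · simpa using hmono hn
  have hr (k : ℕ) : n ≤ r (k + 1) := by
    induction k with
    | zero => simpa using (hmono h0).trans (hstep 0)
    | succ k ih => exact hn.trans ((hmono ih).trans (hstep (k + 1)))
  rw [← sum_range_tsub_self]
  exact (hmono (hr k)).trans (hstep (k + 1))

end Arithmetic

end SquaredNormRank

open SquaredNormRank

/-- Let `r = ‖f‖²` where `f` has `P` linearly independent homogeneous components of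
degree `m` (so `P` is minimal), and let `d ≥ 1`.  The rank `ρ` of the bihomogeneous
polynomial `r(z,z̄)·‖z‖^{2d}` equals the dimension of the degree-`(m+d)` piece of the
ideal generated by the components of `f`.  Then either `P < n` and
`nP − P(P−1)/2 ≤ ρ ≤ nP`, or `ρ ≥ n(n+1)/2`. -/
theorem rank_of_squared_norm_times_power (n m d P ρ : ℕ) (hd : 1 ≤ d)
    (f : Fin P → MvPolynomial (Fin n) ℂ)
    (hf : ∀ j, (f j).IsHomogeneous m)
    (hind : LinearIndependent ℂ f)
    (hρ : ρ = Module.finrank ℂ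
        ((Submodule.restrictScalars ℂ (Ideal.span (Set.range f))) ⊓
          homogeneousSubmodule (Fin n) ℂ (m + d) :
          Submodule ℂ (MvPolynomial (Fin n) ℂ))) :
    (P < n ∧ n * P - P * (P - 1) / 2 ≤ ρ ∧ ρ ≤ n * P) ∨ n * (n + 1) / 2 ≤ ρ := by
  obtain rfl | hP0 := P.eq_zero_or_pos
  · have hI : Ideal.span (Set.range f) = ⊥ := Ideal.span_eq_bot.mpr fun _ ⟨j, _⟩ => j.elim0
    rw [hI, Submodule.restrictScalars_bot, bot_inf_eq, finrank_bot] at hρ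
    rcases n.eq_zero_or_pos with rfl | hn
    · simp
    · simp [hρ, hn]
  set I := Ideal.span (Set.range f)
  set r : ℕ → ℕ := fun k => finrank ℂ (homogeneousPiece I (m + k))
  change ρ = r d at hρ
  have hstep (k : ℕ) : ∑ j ∈ range (r k), (n - j) ≤ r (k + 1) := by
    have := sum_range_tsub_finrank_homogeneousPiece_le I (m + k)
    rwa [Fintype.card_fin] at this
  have hP : P ≤ r 0 := by
    have := card_le_finrank_homogeneousPiece hf hind
    rwa [Fintype.card_fin] at this
  obtain rfl | hd2 : d = 1 ∨ 2 ≤ d := by omega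
  · have hlow : ∑ k ∈ range P, (n - k) ≤ ρ :=
      hρ ▸ (sum_range_tsub_mono n hP).trans (hstep 0)
    by_cases hPn : P < n
    · refine .inl ⟨hPn, (mul_sub_le_sum_range_tsub hPn.le).trans hlow, ?_⟩
      simpa [hρ] using finrank_homogeneousPiece_succ_le (K := ℂ) hf
    · rw [← sum_range_tsub_self]
      exact .inr ((sum_range_tsub_mono n (not_lt.mp hPn)).trans hlow)
  obtain ⟨k, rfl⟩ : ∃ k, d = k + 2 := ⟨d - 2, by omega⟩
  exact .inr (hρ ▸ mul_succ_div_two_le_of_sum_range_tsub_le (hP0.trans_le hP) hstep k)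
end
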